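/- arXiv:2409.11954 — 3 statements merged into one kernel-verified Lean document; each statement's English description precedes it below -/
import Mathlib

section
/- f(t)/t → 1 as t → ∞; in particular the warping function f grows asymptotically linearly, which is the reason the rescaled metrics R²·g_{f,h} converge to the cone C(M,g) as R → 0. -/
/-!
Multiplying the ODE by `f'` shows that the energy `f'² + f^(-α)` is conserved, so it equals its
value `1` at `t = 0`. Since `f'' > 0`, `f'` increases from `0`, hence `f` grows at least linearly
and `f^(-α) → 0`; the energy identity then forces `f' → 1`, and a function whose derivative
tends to `L` satisfies `f t / t → L`.
-/

open Filter Set Topology Asymptotics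

theorem tendsto_div_atTop_of_tendsto_deriv {g g' : ℝ → ℝ} {L : ℝ}
    (hg : ∀ᶠ t in atTop, HasDerivAt g (g' t) t) (hg' : Tendsto g' atTop (𝓝 L)) :
    Tendsto (fun t => g t / t) atTop (𝓝 L) := by
  set h : ℝ → ℝ := fun t => g t - L * t
  suffices hlo : h =o[atTop] id by
    rw [← zero_add L]
    refine (hlo.tendsto_div_nhds_zero.add_const L).congr' ?_
    filter_upwards [eventually_ne_atTop 0] with t ht
    simp only [h, id, sub_div, mul_div_cancel_right₀ _ ht, sub_add_cancel]
  refine isLittleO_iff.2 fun c hc => ?_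
  obtain ⟨T, hT⟩ := eventually_atTop.1 <| (eventually_ge_atTop 0).and <| hg.and <|
    hg'.eventually (Metric.closedBall_mem_nhds L (half_pos hc))
  have hdrift : ∀ t ≥ T, ‖h t - h T‖ ≤ c / 2 * (t - T) := fun t ht =>
    norm_image_sub_le_of_norm_deriv_le_segment' (f' := fun s => g' s - L)
      (fun s hs => (((hT s hs.1).2.1).sub ((hasDerivAt_id s).const_mul L)).hasDerivWithinAt
        |>.congr_deriv (by simp))
      (fun s hs => by simpa [Real.dist_eq] using (hT s hs.1).2.2) t ⟨ht, le_rfl⟩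
  filter_upwards [eventually_ge_atTop T,
    (tendsto_id.const_mul_atTop (half_pos hc)).eventually_ge_atTop ‖h T‖] with t htT hhT
  have hT0 : 0 ≤ T := (hT T le_rfl).1
  calc ‖h t‖ ≤ ‖h t - h T‖ + ‖h T‖ := norm_le_norm_sub_add _ _
    _ ≤ c / 2 * (t - T) + c / 2 * t := add_le_add (hdrift t htT) hhT
    _ ≤ c * ‖id t‖ := by
      rw [id, Real.norm_of_nonneg (hT0.trans htT)]; nlinarith

theorem tendsto_atTop_of_le_deriv {f : ℝ → ℝ} {a c : ℝ} (hf : Differentiable ℝ f) (hc : 0 < c)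
    (hle : ∀ t ≥ a, c ≤ deriv f t) : Tendsto f atTop atTop := by
  have hlin : ∀ t ≥ a, f a + c * (t - a) ≤ f t := fun t ht => by
    have := (convex_Ici a).mul_sub_le_image_sub_of_le_deriv hf.continuous.continuousOn
      hf.differentiableOn (fun x hx => hle x (interior_subset hx)) a self_mem_Ici t ht ht
    linarith
  refine tendsto_atTop_mono' atTop (eventually_atTop.2 ⟨a, hlin⟩) ?_
  exact tendsto_atTop_add_const_left _ _
    ((tendsto_atTop_add_const_right _ _ tendsto_id).const_mul_atTop hc)

section ShaYangODE

variable {α : ℝ} {f : ℝ → ℝ}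

theorem hasDerivAt_deriv_sq_add_rpow_neg {t : ℝ} (hd : DifferentiableAt ℝ f t)
    (hd' : DifferentiableAt ℝ (deriv f) t) (hpos : 0 < f t)
    (hode : deriv (deriv f) t = α / 2 * f t ^ (-α - 1)) :
    HasDerivAt (fun s => deriv f s ^ 2 + f s ^ (-α)) 0 t := by
  refine ((hd'.hasDerivAt.pow 2).add
    (hd.hasDerivAt.rpow_const (p := -α) (Or.inl hpos.ne'))).congr_deriv ?_
  rw [hode]
  push_cast
  ring

theorem deriv_sq_add_rpow_neg_eq (hd : Differentiable ℝ f) (hd' : Differentiable ℝ (deriv f))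
    (hpos : ∀ t ≥ (0 : ℝ), 0 < f t)
    (hode : ∀ t ≥ (0 : ℝ), deriv (deriv f) t = α / 2 * f t ^ (-α - 1)) {t : ℝ} (ht : 0 ≤ t) :
    deriv f t ^ 2 + f t ^ (-α) = deriv f 0 ^ 2 + f 0 ^ (-α) := by
  have hE : ∀ s ≥ (0 : ℝ), HasDerivAt (fun s => deriv f s ^ 2 + f s ^ (-α)) 0 s :=
    fun s hs => hasDerivAt_deriv_sq_add_rpow_neg (hd s) (hd' s) (hpos s hs) (hode s hs)
  exact constant_of_has_deriv_right_zero (fun s hs => (hE s hs.1).continuousAt.continuousWithinAt)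
    (fun s hs => (hE s hs.1).hasDerivWithinAt) t ⟨ht, le_rfl⟩

theorem strictMonoOn_deriv_Ici_zero (hα : 0 < α) (hd' : Differentiable ℝ (deriv f))
    (hpos : ∀ t ≥ (0 : ℝ), 0 < f t)
    (hode : ∀ t ≥ (0 : ℝ), deriv (deriv f) t = α / 2 * f t ^ (-α - 1)) :
    StrictMonoOn (deriv f) (Ici 0) := by
  refine strictMonoOn_of_deriv_pos (convex_Ici 0) hd'.continuous.continuousOn fun t ht => ?_
  have ht : 0 ≤ t := interior_subset ht
  rw [hode t ht]
  exact mul_pos (half_pos hα) (Real.rpow_pos_of_pos (hpos t ht) _)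

end ShaYangODE

/-- `f(t)/t → 1` as `t → ∞`: the warping function grows asymptotically linearly. -/
theorem shaYang_asymptotically_linear (α : ℝ) (hα : 0 < α) (f : ℝ → ℝ)
    (hf : ContDiff ℝ 2 f) (hf0 : f 0 = 1) (hf'0 : deriv f 0 = 0)
    (hfpos : ∀ t ≥ (0 : ℝ), 0 < f t)
    (hode : ∀ t ≥ (0 : ℝ), deriv (deriv f) t = (α / 2) * (f t) ^ (-α - 1)) :
    Filter.Tendsto (fun t => f t / t) Filter.atTop (nhds 1) := by
  have hd : Differentiable ℝ f := hf.differentiable (by norm_num)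
  have hd' : Differentiable ℝ (deriv f) := (hf.deriv' (n := 1)).differentiable (by norm_num)
  have hmono := strictMonoOn_deriv_Ici_zero hα hd' hfpos hode
  have hnonneg : ∀ t ≥ (0 : ℝ), 0 ≤ deriv f t := fun t ht =>
    hf'0 ▸ hmono.monotoneOn self_mem_Ici ht ht
  have henergy : ∀ t ≥ (0 : ℝ), deriv f t ^ 2 + f t ^ (-α) = 1 := fun t ht => by
    simpa [hf0, hf'0] using deriv_sq_add_rpow_neg_eq hd hd' hfpos hode ht
  have htop : Tendsto f atTop atTop :=
    tendsto_atTop_of_le_deriv hd (hf'0 ▸ hmono self_mem_Ici (mem_Ici.2 zero_le_one) one_pos)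
      fun t ht => hmono.monotoneOn (mem_Ici.2 zero_le_one) (mem_Ici.2 (zero_le_one.trans ht)) ht
  have hlim : Tendsto (deriv f) atTop (𝓝 1) := by
    have hsqrt : Tendsto (fun t => √(1 - f t ^ (-α))) atTop (𝓝 1) := by
      simpa using ((tendsto_rpow_neg_atTop hα).comp htop).const_sub 1 |>.sqrt
    refine hsqrt.congr' ?_
    filter_upwards [eventually_ge_atTop 0] with t ht
    rw [← henergy t ht, add_sub_cancel_right, Real.sqrt_sq (hnonneg t ht)]
  exact tendsto_div_atTop_of_tendsto_deriv (.of_forall fun t => (hd t).hasDerivAt) hlim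
end

section
/- h(t) → 2/α as t → ∞, so the spherical warping factor of the Sha–Yang metric converges to the constant 2/α. -/
/-!
Multiplying the ODE by `2 f'` shows that the energy `f'² + f^(-α)` is conserved, hence equal to
its initial value `1`. Since `f'' > 0`, `f'` increases from `f'(0) = 0`, so `f` grows at least
linearly and `f^(-α) → 0`. Therefore `f' = √(1 - f^(-α)) → 1`, i.e. `h → 2/α`.
-/

open Filter Set Real Topology

section ShaYangODE

variable {f : ℝ → ℝ} {α : ℝ}

theorem hasDerivAt_sq_deriv_add_rpow_neg {x : ℝ} (hf : DifferentiableAt ℝ f x)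
    (hf' : DifferentiableAt ℝ (deriv f) x) (hfx : 0 < f x)
    (hode : deriv (deriv f) x = (α / 2) * f x ^ (-α - 1)) :
    HasDerivAt (fun s => deriv f s ^ 2 + f s ^ (-α)) 0 x := by
  refine ((hf'.hasDerivAt.pow 2).add
    (hf.hasDerivAt.rpow_const (p := -α) (.inl hfx.ne'))).congr_deriv ?_
  rw [hode]
  push_cast
  ring

theorem sq_deriv_add_rpow_neg_eq (hf : Differentiable ℝ f) (hf' : Differentiable ℝ (deriv f))
    (hfpos : ∀ t ≥ (0 : ℝ), 0 < f t)
    (hode : ∀ t ≥ (0 : ℝ), deriv (deriv f) t = (α / 2) * f t ^ (-α - 1))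
    {t : ℝ} (ht : 0 ≤ t) :
    deriv f t ^ 2 + f t ^ (-α) = deriv f 0 ^ 2 + f 0 ^ (-α) := by
  have hcont : ContinuousOn (fun s => deriv f s ^ 2 + f s ^ (-α)) (Icc 0 t) :=
    ((hf'.continuous.pow 2).continuousOn).add
      (hf.continuous.continuousOn.rpow_const fun x hx => .inl (hfpos x hx.1).ne')
  exact constant_of_has_deriv_right_zero hcont
    (fun x hx => (hasDerivAt_sq_deriv_add_rpow_neg (hf x) (hf' x) (hfpos x hx.1)
      (hode x hx.1)).hasDerivWithinAt) t (right_mem_Icc.2 ht)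

theorem tendsto_atTop_of_pos_le_deriv (hf : Differentiable ℝ f) {a c : ℝ} (hc : 0 < c)
    (hle : ∀ x ≥ a, c ≤ deriv f x) : Tendsto f atTop atTop := by
  have hlin : ∀ t ≥ a, f a + c * (t - a) ≤ f t := fun t ht => by
    have := (convex_Ici a).mul_sub_le_image_sub_of_le_deriv hf.continuous.continuousOn
      hf.differentiableOn (fun x hx => hle x (interior_subset hx)) a self_mem_Ici t ht ht
    linarith
  refine tendsto_atTop_mono' _ ((eventually_ge_atTop a).mono hlin) ?_
  exact tendsto_atTop_add_const_left _ _
    ((tendsto_atTop_add_const_right _ _ tendsto_id).const_mul_atTop hc)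

end ShaYangODE

/-- `h(t) → 2/α` as `t → ∞`. -/
theorem shaYang_h_tendsto (α : ℝ) (hα : 0 < α) (f : ℝ → ℝ)
    (hf : ContDiff ℝ 2 f) (hf0 : f 0 = 1) (hf'0 : deriv f 0 = 0)
    (hfpos : ∀ t ≥ (0 : ℝ), 0 < f t)
    (hode : ∀ t ≥ (0 : ℝ), deriv (deriv f) t = (α / 2) * (f t) ^ (-α - 1))
    (h : ℝ → ℝ) (hh : h = fun t => (2 / α) * deriv f t) :
    Filter.Tendsto h Filter.atTop (nhds (2 / α)) := by
  have hf₁ : Differentiable ℝ f := hf.differentiable two_ne_zero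
  have hf₂ : Differentiable ℝ (deriv f) :=
    ((contDiff_succ_iff_deriv (n := 1)).mp hf).2.2.differentiable one_ne_zero
  have henergy : ∀ t ≥ (0 : ℝ), deriv f t ^ 2 + f t ^ (-α) = 1 := fun t ht => by
    simpa [hf0, hf'0] using sq_deriv_add_rpow_neg_eq hf₁ hf₂ hfpos hode ht
  have hmono : StrictMonoOn (deriv f) (Ici 0) := by
    refine strictMonoOn_of_deriv_pos (convex_Ici 0) hf₂.continuous.continuousOn fun x hx => ?_
    rw [interior_Ici] at hx
    rw [hode x hx.le]
    have := rpow_pos_of_pos (hfpos x hx.le) (-α - 1)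
    positivity
  have hf'pos : 0 < deriv f 1 := hf'0 ▸ hmono self_mem_Ici (mem_Ici.2 zero_le_one) one_pos
  have hftop : Tendsto f atTop atTop := tendsto_atTop_of_pos_le_deriv hf₁ hf'pos
    fun x hx => hmono.monotoneOn (mem_Ici.2 zero_le_one) (mem_Ici.2 (by linarith)) hx
  have hlim : Tendsto (fun t => √(1 - f t ^ (-α))) atTop (𝓝 1) := by
    simpa using (((tendsto_rpow_neg_atTop hα).comp hftop).const_sub 1).sqrt
  have hsqrt : (fun t => √(1 - f t ^ (-α))) =ᶠ[atTop] deriv f := by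
    filter_upwards [eventually_ge_atTop 0] with t ht
    rw [← henergy t ht, add_sub_cancel_right,
      sqrt_sq (hf'0 ▸ hmono.monotoneOn self_mem_Ici ht ht)]
  rw [hh]
  simpa using (hlim.congr' hsqrt).const_mul (2 / α)
end

section
/- For all t > 0, −(m−1)·h''(t)/h(t) − n·f''(t)/f(t) ≥ 0. (This is the nonnegativity of the radial Ricci curvature Ric(∂t,∂t) of the doubly warped metric dt² + h(t)²·ds²_{m−1} + f(t)²·g in the Sha–Yang construction; it reduces to the arithmetic inequality (m−1)(α+1) ≥ n for α = 2(n−1)/m.) -/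
/-!
Since `f'' = (α/2) f^(-α-1)` is positive, `f'` increases from `f'(0) = 0`, so `f' > 0` and
`h = (2/α) f'` is positive for `t > 0`. Differentiating the ODE gives `f''' = -(α+1) f'' f' / f`,
hence `h''/h = f'''/f' = -(α+1) f''/f`, and the radial Ricci curvature equals
`((m-1)(α+1) - n) · f''/f`. For `α = 2(n-1)/m` the coefficient is `(m-2)(n+m-1)/m ≥ 0`.
-/

open Filter Set Topology

theorem le_sub_one_mul_add_one_of_eq_two_mul_sub_one_div {n m α : ℝ} (hn : 0 ≤ n) (hm : 2 ≤ m)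
    (hα : α = 2 * (n - 1) / m) : n ≤ (m - 1) * (α + 1) := by
  have hcoef : (m - 1) * (α + 1) - n = (m - 2) * (n + m - 1) / m := by
    rw [hα]; field_simp; ring
  have : 0 ≤ (m - 2) * (n + m - 1) / m := by
    apply div_nonneg (mul_nonneg _ _) <;> linarith
  linarith

theorem strictMonoOn_Ici_of_deriv_pos {g : ℝ → ℝ} {a : ℝ} (hg : ∀ s ≥ a, 0 < deriv g s) :
    StrictMonoOn g (Ici a) := by
  refine strictMonoOn_of_deriv_pos (convex_Ici a) ?_ fun s hs => hg s (interior_subset hs)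
  exact fun s hs => (differentiableAt_of_deriv_ne_zero (hg s hs).ne').continuousAt.continuousWithinAt

theorem deriv_deriv_deriv_eq_of_eventuallyEq_rpow {f : ℝ → ℝ} {c p t : ℝ} (hft : 0 < f t)
    (hdf : DifferentiableAt ℝ f t) (hode : deriv (deriv f) =ᶠ[𝓝 t] fun s => c * f s ^ p) :
    deriv (deriv (deriv f)) t = p * deriv (deriv f) t * deriv f t / f t := by
  rw [hode.deriv_eq, hode.eq_of_nhds,
    ((hdf.hasDerivAt.rpow_const (Or.inl hft.ne')).const_mul c).deriv, Real.rpow_sub_one hft.ne']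
  ring

theorem shaYang_Ric_radial_nonneg_general (n m : ℕ) (hn : 2 ≤ n) (hm : 2 ≤ m)
    (α : ℝ) (hα : α = 2 * ((n : ℝ) - 1) / (m : ℝ))
    (f : ℝ → ℝ)
    (hf'0 : deriv f 0 = 0)
    (hfpos : ∀ t ≥ (0 : ℝ), 0 < f t)
    (hode : ∀ t ≥ (0 : ℝ), deriv (deriv f) t = (α / 2) * (f t) ^ (-α - 1))
    (h : ℝ → ℝ) (hh : h = fun t => (2 / α) * deriv f t) :
    ∀ t > (0 : ℝ),
      0 ≤ -((m : ℝ) - 1) * deriv (deriv h) t / h t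
          - (n : ℝ) * deriv (deriv f) t / f t := by
  intro t ht
  have hαpos : 0 < α := by
    have : (2 : ℝ) ≤ n := by exact_mod_cast hn
    rw [hα]; exact div_pos (by linarith) (by positivity)
  have hf''pos : ∀ s ≥ (0 : ℝ), 0 < deriv (deriv f) s := fun s hs => by
    rw [hode s hs]; exact mul_pos (by positivity) (Real.rpow_pos_of_pos (hfpos s hs) _)
  have hf't : 0 < deriv f t := by
    simpa [hf'0] using strictMonoOn_Ici_of_deriv_pos hf''pos self_mem_Ici (mem_Ici.2 ht.le) ht
  have hf''' := deriv_deriv_deriv_eq_of_eventuallyEq_rpow (hfpos t ht.le)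
    (differentiableAt_of_deriv_ne_zero hf't.ne')
    (eventually_of_mem (Ioi_mem_nhds ht) fun s hs => hode s (le_of_lt hs))
  have hRic : -((m : ℝ) - 1) * deriv (deriv h) t / h t - (n : ℝ) * deriv (deriv f) t / f t
      = ((m - 1) * (α + 1) - n) * (deriv (deriv f) t / f t) := by
    subst hh
    simp only [deriv_const_mul_field', hf''']
    field_simp [hf't.ne', (hfpos t ht.le).ne']
    ring
  rw [hRic]
  refine mul_nonneg ?_ (div_nonneg (hf''pos t ht.le).le (hfpos t ht.le).le)
  have := le_sub_one_mul_add_one_of_eq_two_mul_sub_one_div (Nat.cast_nonneg n)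
    (by exact_mod_cast hm) hα
  linarith

/-- Nonnegativity of the radial Ricci curvature `Ric(∂t,∂t)` of the doubly warped
metric `dt² + h(t)²·ds²_{m−1} + f(t)²·g`: for all `t > 0`,
`−(m−1)·h''(t)/h(t) − n·f''(t)/f(t) ≥ 0`. -/
theorem shaYang_Ric_radial_nonneg (n m : ℕ) (hn : 2 ≤ n) (hm : 2 ≤ m)
    (α : ℝ) (hα : α = 2 * ((n : ℝ) - 1) / (m : ℝ))
    (f : ℝ → ℝ) (hf : ContDiff ℝ 3 f)
    (hf0 : f 0 = 1) (hf'0 : deriv f 0 = 0)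
    (hfpos : ∀ t ≥ (0 : ℝ), 0 < f t)
    (hode : ∀ t ≥ (0 : ℝ), deriv (deriv f) t = (α / 2) * (f t) ^ (-α - 1))
    (h : ℝ → ℝ) (hh : h = fun t => (2 / α) * deriv f t) :
    ∀ t > (0 : ℝ),
      0 ≤ -((m : ℝ) - 1) * deriv (deriv h) t / h t
          - (n : ℝ) * deriv (deriv f) t / f t :=
  shaYang_Ric_radial_nonneg_general n m hn hm α hα f hf'0 hfpos hode h hh
end
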